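/- Let T be a search tree on a tree G (an STT), and let v, v' be two distinct children of a node p in T. Then ∂(T_v) ∩ ∂(T_{v'}) = {p}. -/

import Mathlib

open SimpleGraph

variable {V : Type*}

/-- Reachability within a vertex set `S`. -/
def reachIn (G : SimpleGraph V) (S : Set V) : V → V → Prop :=
  Relation.ReflTransGen (fun x y => x ∈ S ∧ y ∈ S ∧ G.Adj x y)

/-- The connected component of `v` inside the vertex set `S`. -/
def compIn (G : SimpleGraph V) (S : Set V) (v : V) : Set V :=
  {u | reachIn G S v u}

/-- `IsSearchTree G par S r`: the parent map `par` describes a search tree with root `r`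
on the part of `G` induced by `S`, built recursively: the root `r` is chosen, and each
connected component of `S \ {r}` carries a search tree whose root is a child of `r`. -/
inductive IsSearchTree (G : SimpleGraph V) (par : V → Option V) : Set V → V → Prop where
  | node (S : Set V) (r : V) (ρ : V → V) (hr : r ∈ S)
      (hρ : ∀ v ∈ S, v ≠ r → par (ρ v) = some r)
      (h : ∀ v ∈ S, v ≠ r → IsSearchTree G par (compIn G (S \ {r}) v) (ρ v)) :
      IsSearchTree G par S r

/-- `isAnc par a v`: `a` is an ancestor of `v` (reflexively). -/
def isAnc (par : V → Option V) (a v : V) : Prop :=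
  Relation.ReflTransGen (fun x y => par x = some y) v a

/-- The subtree rooted at `v`: all descendants of `v` (including `v`). -/
def subtree (par : V → Option V) (v : V) : Set V := {u | isAnc par v u}

/-- The outer boundary `∂(T_v)` of the subtree rooted at `v`. -/
def bdry (G : SimpleGraph V) (par : V → Option V) (v : V) : Set V :=
  {x | x ∉ subtree par v ∧ ∃ u ∈ subtree par v, G.Adj x u}

/-- A search tree is 2-cut if every subtree boundary has size at most 2. -/
def TwoCut (G : SimpleGraph V) (par : V → Option V) : Prop :=
  ∀ v, (bdry G par v).ncard ≤ 2

open Classical in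
/-- The STT rotation of `v` with its parent `p`: `p` becomes a child of `v`, `v` takes the
former parent of `p`, and any child `c` of `v` with `p ∈ ∂(T_c)` is reattached to `p`. -/
noncomputable def rotate (G : SimpleGraph V) (par : V → Option V) (v p : V) :
    V → Option V := fun x =>
  if x = v then par p
  else if x = p then some v
  else if par x = some v ∧ p ∈ bdry G par x then some p
  else par x

/-- A splay step at `x`: a single rotation if `x` has no grandparent; a ZIG-ZAG
(two rotations at `x`) if `x` is a separator; a ZIG-ZIG (rotation at the parent,
then at `x`) otherwise. -/
noncomputable def splayStep (G : SimpleGraph V) (par : V → Option V) (x : V) :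
    V → Option V :=
  match par x with
  | none => par
  | some p =>
    match par p with
    | none => rotate G par x p
    | some g =>
      if (bdry G par x).ncard = 2 then
        rotate G (rotate G par x p) x g
      else
        rotate G (rotate G par p g) x p


/-!
Unfolding the recursive construction, the subtree of a child `v` of `p` is the component of `v`
in `S \ {p}`, where `S` is the connected vertex set on which `p` was chosen as root. Since `S` is
connected, `p` is adjacent to every such component. A common neighbour `x ≠ p` of two components
cannot lie in `S \ {p}`, where it would join them, nor outside `S`: its neighbours `u`, `u'` in the
two components, together with a path from `u` to `u'` inside `S`, would close a cycle in `G`.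
-/

section Components

variable {G : SimpleGraph V} {S A : Set V} {a b c u x : V}

lemma reachIn.symm (h : reachIn G S a b) : reachIn G S b a := by
  induction h with
  | refl => exact .refl
  | tail _ hbc ih => exact .head ⟨hbc.2.1, hbc.1, hbc.2.2.symm⟩ ih

lemma reachIn.exists_walk (h : reachIn G S a b) (ha : a ∈ S) :
    ∃ W : G.Walk a b, ∀ y ∈ W.support, y ∈ S := by
  induction h using Relation.ReflTransGen.head_induction_on with
  | refl => exact ⟨.nil, by simpa using ha⟩
  | head step _ ih =>
    obtain ⟨W, hW⟩ := ih step.2.1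
    refine ⟨.cons step.2.2 W, fun y hy => ?_⟩
    rcases List.mem_cons.mp (Walk.support_cons _ W ▸ hy) with rfl | hy
    exacts [step.1, hW y hy]

lemma reachIn.exists_adj_mem_compIn (h : reachIn G S a b) (hab : a ≠ b) :
    ∃ u ∈ compIn G (S \ {b}) a, G.Adj b u := by
  induction h using Relation.ReflTransGen.head_induction_on with
  | refl => exact absurd rfl hab
  | @head a c step _ ih =>
    by_cases hcb : c = b
    · exact ⟨a, .refl, (hcb ▸ step.2.2).symm⟩
    · obtain ⟨u, hu, hadj⟩ := ih hcb
      exact ⟨u, .head ⟨⟨step.1, hab⟩, ⟨step.2.1, hcb⟩, step.2.2⟩ hu, hadj⟩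

lemma reachIn.compIn (h : reachIn G A a b) : reachIn G (compIn G A a) a b := by
  induction h with
  | refl => exact .refl
  | tail hpre hstep ih => exact ih.tail ⟨hpre, hpre.tail hstep, hstep.2.2⟩

lemma mem_compIn_self : a ∈ compIn G A a := .refl

lemma mem_compIn_comm : a ∈ compIn G A b ↔ b ∈ compIn G A a :=
  ⟨reachIn.symm, reachIn.symm⟩

lemma compIn_subset (ha : a ∈ A) : compIn G A a ⊆ A := fun _ hu =>
  match Relation.ReflTransGen.cases_tail hu with
  | .inl h => h ▸ ha
  | .inr ⟨_, _, hc⟩ => hc.2.1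

lemma mem_compIn_of_adj (hu : u ∈ compIn G A a) (huA : u ∈ A) (hx : x ∈ A) (hux : G.Adj u x) :
    x ∈ compIn G A a :=
  Relation.ReflTransGen.tail hu ⟨huA, hx, hux⟩

lemma mem_compIn_trans (hb : b ∈ compIn G A a) (hc : c ∈ compIn G A b) : c ∈ compIn G A a :=
  Relation.ReflTransGen.trans hb hc

lemma not_mem_compIn_of_not_mem (hb : b ∉ compIn G A a) (hc : c ∈ compIn G A a) :
    c ∉ compIn G A b := fun hcb =>
  hb (mem_compIn_trans hc (mem_compIn_comm.mp hcb))

def IsConnIn (G : SimpleGraph V) (S : Set V) : Prop :=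
  ∀ a ∈ S, ∀ b ∈ S, reachIn G S a b

lemma isConnIn_compIn : IsConnIn G (compIn G A a) := fun _ hb _ hc =>
  hb.compIn.symm.trans hc.compIn

lemma isConnIn_univ (h : G.Preconnected) : IsConnIn G Set.univ := by
  rintro a - b -
  obtain ⟨W⟩ := h a b
  induction W with
  | nil => exact .refl
  | cons hadj _ ih => exact .head ⟨trivial, trivial, hadj⟩ ih

lemma SimpleGraph.IsAcyclic.mem_of_adj_of_adj (hG : G.IsAcyclic) (hS : IsConnIn G S) {u' : V}
    (hu : u ∈ S) (hu' : u' ∈ S) (huu' : u ≠ u') (hxu : G.Adj x u) (hxu' : G.Adj x u') :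
    x ∈ S := by
  classical
  by_contra hxS
  obtain ⟨W, hW⟩ := (hS u hu u' hu').exists_walk hu
  have hpath : (Walk.cons hxu.symm (Walk.cons hxu' Walk.nil)).IsPath := by
    have : x ≠ u ∧ x ≠ u' := ⟨fun h => hxS (h ▸ hu), fun h => hxS (h ▸ hu')⟩
    simp [Walk.isPath_def, this.1.symm, this.2, huu']
  have hx : x ∈ ((⟨_, hpath⟩ : G.Path u u') : G.Walk u u').support := by simp
  rw [(hG.subsingleton_path u u').elim ⟨_, hpath⟩ W.toPath] at hx
  exact hxS (hW x (W.support_toPath_subset_support hx))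

def outerBdry (G : SimpleGraph V) (A : Set V) : Set V :=
  {x | x ∉ A ∧ ∃ u ∈ A, G.Adj x u}

lemma mem_outerBdry : x ∈ outerBdry G A ↔ x ∉ A ∧ ∃ u ∈ A, G.Adj x u := Iff.rfl

lemma mem_outerBdry_compIn_sdiff (hS : IsConnIn G S) (ha : a ∈ S) (hb : b ∈ S \ {a}) :
    a ∈ outerBdry G (compIn G (S \ {a}) b) :=
  mem_outerBdry.mpr
    ⟨fun h => (compIn_subset hb h).2 rfl, (hS b hb.1 a ha).exists_adj_mem_compIn hb.2⟩

theorem outerBdry_compIn_inter_outerBdry_compIn (hG : G.IsAcyclic) (hS : IsConnIn G S)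
    {p v v' : V} (hp : p ∈ S) (hv : v ∈ S \ {p}) (hv' : v' ∈ S \ {p})
    (hvv' : v ∉ compIn G (S \ {p}) v') :
    outerBdry G (compIn G (S \ {p}) v) ∩ outerBdry G (compIn G (S \ {p}) v') = {p} := by
  ext x
  constructor
  · rintro ⟨⟨hxC, u, hu, hxu⟩, -, u', hu', hxu'⟩
    by_contra hxp
    have huu' : u ≠ u' := fun h => not_mem_compIn_of_not_mem hvv' hu' (h ▸ hu)
    have hxS : x ∈ S := hG.mem_of_adj_of_adj hS (compIn_subset hv hu).1
      (compIn_subset hv' hu').1 huu' hxu hxu'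
    exact hxC (mem_compIn_of_adj hu (compIn_subset hv hu) ⟨hxS, hxp⟩ hxu.symm)
  · rintro rfl
    exact ⟨mem_outerBdry_compIn_sdiff hS hp hv, mem_outerBdry_compIn_sdiff hS hp hv'⟩

end Components

section SearchTree

variable {G : SimpleGraph V} {par : V → Option V} {S : Set V} {r v x : V}

lemma IsSearchTree.root_mem (h : IsSearchTree G par S r) : r ∈ S := by
  cases h with | node _ _ _ hr => exact hr

lemma IsSearchTree.exists_par_mem (h : IsSearchTree G par S r) (hx : x ∈ S) (hxr : x ≠ r) :
    ∃ z ∈ S, par x = some z := by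
  induction h with
  | node S r ρ hr hρ h ih =>
    by_cases hxρ : x = ρ x
    · exact ⟨r, hr, hxρ ▸ hρ x hx hxr⟩
    · obtain ⟨z, hz, hpar⟩ := ih x hx hxr mem_compIn_self hxρ
      exact ⟨z, (compIn_subset (Set.mem_sdiff_of_mem hx hxr) hz).1, hpar⟩

lemma IsSearchTree.eq_root_of_par_not_mem (h : IsSearchTree G par S r) (hx : x ∈ S)
    {z : V} (hpar : par x = some z) (hz : z ∉ S) : x = r := by
  by_contra hxr
  obtain ⟨z', hz', hpar'⟩ := h.exists_par_mem hx hxr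
  exact hz (Option.some.inj (hpar.symm.trans hpar') ▸ hz')

lemma IsSearchTree.subset_subtree (h : IsSearchTree G par S r) : S ⊆ subtree par r := by
  induction h with
  | node S r ρ _ hρ _ ih =>
    intro y hy
    by_cases hyr : y = r
    · exact hyr ▸ Relation.ReflTransGen.refl
    · exact Relation.ReflTransGen.tail (ih y hy hyr mem_compIn_self) (hρ y hy hyr)

def ChildClosed (par : V → Option V) (S : Set V) (r : V) : Prop :=
  ∀ y z, par y = some z → z ∈ S → y ∈ S ∧ y ≠ r

lemma ChildClosed.subtree_subset (hc : ChildClosed par S r) (hr : r ∈ S) :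
    subtree par r ⊆ S := fun _ hy => by
  induction hy using Relation.ReflTransGen.head_induction_on with
  | refl => exact hr
  | head step _ ih => exact (hc _ _ step ih).1

lemma ChildClosed.compIn {ρ : V → V} (hc : ChildClosed par S r)
    (hρ : ∀ v ∈ S, v ≠ r → par (ρ v) = some r)
    (h : ∀ v ∈ S, v ≠ r → IsSearchTree G par (compIn G (S \ {r}) v) (ρ v))
    (hv : v ∈ S \ {r}) : ChildClosed par (compIn G (S \ {r}) v) (ρ v) := by
  intro y z hyz hzC
  obtain ⟨hzS, hz_ne⟩ : z ∈ S \ {r} := compIn_subset hv hzC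
  obtain ⟨hyS, hyr⟩ := hc y z hyz hzS
  refine ⟨?_, fun hyρ => hz_ne (Option.some.inj (hyz.symm.trans (hyρ ▸ hρ v hv.1 hv.2)))⟩
  have hyρ : y ≠ ρ y := fun hyρ => hz_ne (Option.some.inj (hyz.symm.trans (hyρ ▸ hρ y hyS hyr)))
  obtain ⟨z', hz', hpar⟩ := (h y hyS hyr).exists_par_mem mem_compIn_self hyρ
  cases Option.some.inj (hyz.symm.trans hpar)
  exact mem_compIn_trans hzC (mem_compIn_comm.mp hz')

structure IsSearchSubtree (G : SimpleGraph V) (par : V → Option V) (S : Set V) (r : V) :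
    Prop where
  tree : IsSearchTree G par S r
  closed : ChildClosed par S r
  conn : IsConnIn G S

lemma IsSearchSubtree.subtree_eq (hT : IsSearchSubtree G par S r) : subtree par r = S :=
  (hT.closed.subtree_subset hT.tree.root_mem).antisymm hT.tree.subset_subtree

lemma IsSearchSubtree.of_root (hG : G.Preconnected) (hroot : par r = none)
    (hT : IsSearchTree G par Set.univ r) : IsSearchSubtree G par Set.univ r :=
  ⟨hT, fun y _ hy _ => ⟨trivial, fun hyr => by simp [hyr, hroot] at hy⟩, isConnIn_univ hG⟩

lemma IsSearchSubtree.exists_of_mem (hT : IsSearchSubtree G par S r) (hx : x ∈ S) :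
    ∃ S', IsSearchSubtree G par S' x := by
  obtain ⟨ht, hc, hconn⟩ := hT
  induction ht generalizing x with
  | node S r ρ hr hρ h ih =>
    by_cases hxr : x = r
    · exact ⟨S, hxr ▸ .node S r ρ hr hρ h, hxr ▸ hc, hconn⟩
    · exact ih x hx hxr mem_compIn_self (hc.compIn hρ h ⟨hx, hxr⟩) isConnIn_compIn

lemma IsSearchSubtree.child (hT : IsSearchSubtree G par S r) (hv : par v = some r) :
    v ∈ S \ {r} ∧ IsSearchSubtree G par (compIn G (S \ {r}) v) v := by
  obtain ⟨hvS, hvr⟩ := hT.closed v r hv hT.tree.root_mem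
  have hv' : v ∈ S \ {r} := ⟨hvS, hvr⟩
  obtain ⟨ht, hc, -⟩ := hT
  cases ht with
  | node S r ρ _ hρ h =>
    have hvρ : ρ v = v := ((h v hvS hvr).eq_root_of_par_not_mem mem_compIn_self hv
      fun hrC => (compIn_subset hv' hrC).2 rfl).symm
    have htree := h v hvS hvr
    have hclosed := hc.compIn hρ h hv'
    rw [hvρ] at htree hclosed
    exact ⟨hv', htree, hclosed, isConnIn_compIn⟩

end SearchTree

/-- In a search tree on a tree `G` (an STT), if `v` and `v'` are distinct
children of `p`, then `∂(T_v) ∩ ∂(T_{v'}) = {p}`. -/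
theorem bdry_inter_bdry_of_siblings (G : SimpleGraph V) (hG : G.IsTree)
    (par : V → Option V) (r : V) (hroot : par r = none)
    (hT : IsSearchTree G par Set.univ r)
    (p v v' : V) (hv : par v = some p) (hv' : par v' = some p) (hne : v ≠ v') :
    bdry G par v ∩ bdry G par v' = {p} := by
  obtain ⟨S, hp⟩ :=
    (IsSearchSubtree.of_root hG.connected.preconnected hroot hT).exists_of_mem (Set.mem_univ p)
  obtain ⟨hvS, hTv⟩ := hp.child hv
  obtain ⟨hv'S, hTv'⟩ := hp.child hv'
  have hvv' : v ∉ compIn G (S \ {p}) v' := fun hvC =>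
    hne (hTv'.tree.eq_root_of_par_not_mem hvC hv fun hpC => (compIn_subset hv'S hpC).2 rfl)
  change outerBdry G (subtree par v) ∩ outerBdry G (subtree par v') = {p}
  rw [hTv.subtree_eq, hTv'.subtree_eq]
  exact outerBdry_compIn_inter_outerBdry_compIn hG.isAcyclic hp.conn hp.tree.root_mem
    hvS hv'S hvv'
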